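/- arXiv:1606.02184 — 3 statements merged into one kernel-verified Lean document; each statement's English description precedes it below -/
import Mathlib

section
/- Let n ≥ 3, let D_n = ⟨a,b | a^n = b^2 = 1, bab = a^{-1}⟩, and let T ⊆ ⟨a⟩ be a union of atoms of the Boolean algebra B(⟨a⟩). Then for every 1 ≤ h ≤ ⌊(n−1)/2⌋, χ_h(T) and χ_h(T²) are integers and 2χ_h(T²) is a perfect square (the square of an integer). -/
open DihedralGroup Polynomial

/-- The degree-2 irreducible character `χ_h` of the dihedral group `D_n`:
`χ_h(a^k) = 2cos(2khπ/n)` and `χ_h(ba^k) = 0`. -/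
noncomputable def chi (n h : ℕ) : DihedralGroup n → ℝ
  | .r k => 2 * Real.cos (2 * k.val * h * Real.pi / n)
  | .sr _ => 0

/-- `χ(A) = Σ_{x ∈ A} χ(x)`. -/
noncomputable def chiSum (n h : ℕ) (A : Set (DihedralGroup n)) : ℝ :=
  ∑ᶠ x ∈ A, chi n h x

/-- `χ(A²) = Σ_{x,y ∈ A} χ(xy)`, over ordered pairs. -/
noncomputable def chiSum2 (n h : ℕ) (A : Set (DihedralGroup n)) : ℝ :=
  ∑ᶠ x ∈ A, ∑ᶠ y ∈ A, chi n h (x * y)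

/-- The Cayley graph `X(G,S)`: vertices `G`, with `x,y` adjacent iff `x⁻¹y ∈ S`
(for `S` inverse-closed and not containing `1`). -/
def cayleyGraph {G : Type*} [Group G] (S : Set G) : SimpleGraph G :=
  SimpleGraph.fromRel (fun x y => x⁻¹ * y ∈ S)

open scoped Classical in
/-- The adjacency matrix of a graph, over `ℂ`. -/
noncomputable def adjMat {V : Type*} [Fintype V] (G : SimpleGraph V) : Matrix V V ℂ :=
  Matrix.of fun x y => if G.Adj x y then 1 else 0

/-- A graph is integral if every eigenvalue of its adjacency matrix is an integer. -/
def IsIntegralGraph {V : Type*} [Fintype V] [DecidableEq V] (G : SimpleGraph V) : Prop :=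
  ∀ μ ∈ spectrum ℂ (adjMat G), ∃ z : ℤ, μ = (z : ℂ)

/-- The cyclic subgroup `⟨a⟩` of `D_n`, as a set. -/
def rSet (n : ℕ) : Set (DihedralGroup n) := {x | ∃ k, x = .r k}

/-- The coset `b⟨a⟩` of `D_n`, as a set. -/
def srSet (n : ℕ) : Set (DihedralGroup n) := {x | ∃ k, x = .sr k}

/-- `S` belongs to the Boolean algebra `B(⟨a⟩)`, i.e. `S ⊆ ⟨a⟩` is a union of atoms
`[a^l] = {a^k : gcd(k,n) = gcd(l,n)}`: membership in `S` is constant on each atom. -/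
def InBooleanAlgebra (n : ℕ) (S : Set (DihedralGroup n)) : Prop :=
  S ⊆ rSet n ∧ ∀ k l : ZMod n, Nat.gcd k.val n = Nat.gcd l.val n →
    (DihedralGroup.r k ∈ S ↔ DihedralGroup.r l ∈ S)

/-- The multiplicity of `x` in the multiset `S² = {s₁s₂ : (s₁,s₂) ∈ S × S}` (ordered pairs). -/
noncomputable def sqMult {n : ℕ} (S : Set (DihedralGroup n)) (x : DihedralGroup n) : ℕ :=
  Nat.card {p : DihedralGroup n × DihedralGroup n // p.1 ∈ S ∧ p.2 ∈ S ∧ p.1 * p.2 = x}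

/-- The irreducible character `φ_h` of the cyclic group `⟨a⟩` of order `n`:
`φ_h(a^k) = e^{2πihk/n}`. -/
noncomputable def phi (n h : ℕ) (k : ZMod n) : ℂ :=
  Complex.exp (2 * Real.pi * Complex.I * h * k.val / n)

/-!
Put `ζ = exp(2πih/n)`. Then `χ_h(a^k) = 2 Re ζ^k` and `ζ^(k+l) = ζ^k ζ^l`, so `χ_h(T) = 2 Re f`
and `χ_h(T²) = 2 Re f²` for `f = Σ_{a^k ∈ T} ζ^k`. As `T` is a union of atoms, `f` is a sum of
atom sums `Σ_{gcd(k,n) = d} ζ^k`, which are integers by downward induction on the divisor `d`: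
the sum of `ζ^k` over all multiples `k` of `d` is a geometric sum, equal to `n/d` or `0`, and it
is the atom sum of `d` plus atom sums of larger divisors. Hence `f = z ∈ ℤ`, `χ_h(T) = 2z`,
`χ_h(T²) = 2z²` and `2χ_h(T²) = (2z)²`.
-/

open Finset

theorem sum_filter_dvd_val_eq_sum_range {M : Type*} [AddCommMonoid M] {n d : ℕ} [NeZero n]
    (hd : d ∣ n) (F : ℕ → M) :
    ∑ k : ZMod n with d ∣ k.val, F k.val = ∑ j ∈ range (n / d), F (d * j) := by
  obtain ⟨m, rfl⟩ := hd
  have hd0 : 0 < d := Nat.pos_of_ne_zero (left_ne_zero_of_mul (NeZero.ne (d * m)))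
  have hlt {j : ℕ} (hj : j ∈ range m) : d * j < d * m :=
    Nat.mul_lt_mul_of_pos_left (mem_range.1 hj) hd0
  rw [Nat.mul_div_cancel_left m hd0]
  refine sum_nbij' (fun k => k.val / d) (fun j => ((d * j : ℕ) : ZMod (d * m)))
    (fun k _ => mem_range.2 (Nat.div_lt_of_lt_mul (ZMod.val_lt k)))
    (fun j hj => ?_) (fun k hk => ?_) (fun j hj => ?_) (fun k hk => ?_)
  · rw [mem_filter, ZMod.val_cast_of_lt (hlt hj)]
    exact ⟨mem_univ _, dvd_mul_right d j⟩
  · simp [Nat.mul_div_cancel' (mem_filter.1 hk).2]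
  · simp only [ZMod.val_cast_of_lt (hlt hj), Nat.mul_div_cancel_left j hd0]
  · simp [Nat.mul_div_cancel' (mem_filter.1 hk).2]

theorem geom_sum_mem_bot_of_pow_eq_one {R : Type*} [CommRing R] [IsDomain R] {w : R} {m : ℕ}
    (hw : w ^ m = 1) : ∑ j ∈ range m, w ^ j ∈ (⊥ : Subring R) := by
  by_cases hw1 : w = 1
  · simp [hw1, natCast_mem]
  · have : (∑ j ∈ range m, w ^ j) * (w - 1) = 0 := by rw [geom_sum_mul, hw, sub_self]
    rw [(mul_eq_zero.1 this).resolve_right (sub_ne_zero.2 hw1)]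
    exact zero_mem _

def gcdAtom (n : ℕ) [NeZero n] (d : ℕ) : Finset (ZMod n) := {k | k.val.gcd n = d}

theorem sum_filter_dvd_val_eq_sum_gcdAtom {M : Type*} [AddCommMonoid M] {n d : ℕ} [NeZero n]
    (hd : d ∣ n) (F : ZMod n → M) :
    ∑ k : ZMod n with d ∣ k.val, F k = ∑ e ∈ n.divisors with d ∣ e, ∑ k ∈ gcdAtom n e, F k := by
  rw [← sum_fiberwise_of_maps_to (g := fun k : ZMod n => k.val.gcd n)]
  · refine sum_congr rfl fun e he => sum_congr ?_ fun _ _ => rfl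
    ext k
    simp only [gcdAtom, mem_filter, mem_univ, true_and, and_iff_right_iff_imp]
    rintro rfl
    exact (mem_filter.1 he).2.trans (Nat.gcd_dvd_left _ _)
  · intro k hk
    simp only [mem_filter, Nat.mem_divisors, mem_univ, true_and] at hk ⊢
    exact ⟨⟨Nat.gcd_dvd_right _ _, NeZero.ne n⟩, Nat.dvd_gcd hk hd⟩

section RootOfUnity

variable {R : Type*} [CommRing R] [IsDomain R] {n : ℕ} [NeZero n] {ζ : R}

theorem sum_filter_dvd_pow_val_mem_bot (hζ : ζ ^ n = 1) {d : ℕ} (hd : d ∣ n) :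
    ∑ k : ZMod n with d ∣ k.val, ζ ^ k.val ∈ (⊥ : Subring R) := by
  rw [sum_filter_dvd_val_eq_sum_range hd (ζ ^ ·)]
  simp_rw [pow_mul]
  refine geom_sum_mem_bot_of_pow_eq_one ?_
  rw [← pow_mul, Nat.mul_div_cancel' hd, hζ]

theorem sum_gcdAtom_pow_val_mem_bot (hζ : ζ ^ n = 1) {d : ℕ} (hd : d ∣ n) :
    ∑ k ∈ gcdAtom n d, ζ ^ k.val ∈ (⊥ : Subring R) := by
  induction hm : n - d using Nat.strong_induction_on generalizing d with
  | _ m ih =>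
  have hd_mem : d ∈ n.divisors.filter (d ∣ ·) :=
    mem_filter.2 ⟨Nat.mem_divisors.2 ⟨hd, NeZero.ne n⟩, dvd_rfl⟩
  have hsplit := sum_filter_dvd_val_eq_sum_gcdAtom hd (ζ ^ ZMod.val ·)
  rw [← add_sum_erase _ _ hd_mem] at hsplit
  rw [eq_sub_of_add_eq hsplit.symm]
  refine sub_mem (sum_filter_dvd_pow_val_mem_bot hζ hd) (sum_mem fun e he => ?_)
  simp only [mem_erase, mem_filter, Nat.mem_divisors] at he
  obtain ⟨hed, ⟨hen, -⟩, hde⟩ := he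
  have hen_le : e ≤ n := Nat.le_of_dvd (NeZero.pos n) hen
  have hde_lt : d < e := (Nat.le_of_dvd (Nat.pos_of_dvd_of_pos hen (NeZero.pos n)) hde).lt_of_ne
    (Ne.symm hed)
  exact ih (n - e) (by omega) hen rfl

theorem sum_pow_val_mem_bot_of_gcd_invariant (hζ : ζ ^ n = 1) {S : Finset (ZMod n)}
    (hS : ∀ k l : ZMod n, k.val.gcd n = l.val.gcd n → (k ∈ S ↔ l ∈ S)) :
    ∑ k ∈ S, ζ ^ k.val ∈ (⊥ : Subring R) := by
  rw [← sum_fiberwise_of_maps_to (t := n.divisors) (g := fun k : ZMod n => k.val.gcd n)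
    fun k _ => Nat.mem_divisors.2 ⟨Nat.gcd_dvd_right _ _, NeZero.ne n⟩]
  refine sum_mem fun e he => ?_
  by_cases hSe : ∃ l ∈ S, l.val.gcd n = e
  · obtain ⟨l, hl, rfl⟩ := hSe
    have : S.filter (fun k => k.val.gcd n = l.val.gcd n) = gcdAtom n (l.val.gcd n) := by
      ext k
      simp only [gcdAtom, mem_filter, mem_univ, true_and, and_iff_right_iff_imp]
      exact fun hk => (hS k l hk).2 hl
    rw [this]
    exact sum_gcdAtom_pow_val_mem_bot hζ (Nat.mem_divisors.1 he).1
  · rw [filter_false_of_mem fun k hk hke => hSe ⟨k, hk, hke⟩, sum_empty]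
    exact zero_mem _

end RootOfUnity

theorem pow_val_add {M : Type*} [Monoid M] {n : ℕ} [NeZero n] {ζ : M} (hζ : ζ ^ n = 1)
    (k l : ZMod n) : ζ ^ (k + l).val = ζ ^ k.val * ζ ^ l.val := by
  rw [ZMod.val_add, ← pow_add, ← pow_eq_pow_mod _ hζ]

theorem chi_r_eq_two_mul_re (n h : ℕ) (k : ZMod n) :
    chi n h (r k) = 2 * (Complex.exp (2 * Real.pi * Complex.I * h / n) ^ k.val).re := by
  rw [← Complex.exp_nat_mul, show (k.val : ℂ) * (2 * Real.pi * Complex.I * h / n)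
    = ((2 * k.val * h * Real.pi / n : ℝ) : ℂ) * Complex.I by push_cast; ring,
    Complex.exp_ofReal_mul_I_re]
  rfl

theorem exp_two_pi_mul_I_mul_div_pow (n h : ℕ) [NeZero n] :
    Complex.exp (2 * Real.pi * Complex.I * h / n) ^ n = 1 := by
  rw [← Complex.exp_nat_mul, show (n : ℂ) * (2 * Real.pi * Complex.I * h / n)
    = h * (2 * Real.pi * Complex.I) by field_simp [NeZero.ne n]]
  exact Complex.exp_nat_mul_two_pi_mul_I h

open scoped Classical in
theorem finsum_mem_eq_sum_filter_r {M : Type*} [AddCommMonoid M] {n : ℕ} [NeZero n]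
    {T : Set (DihedralGroup n)} (hT : T ⊆ rSet n) (g : DihedralGroup n → M) :
    ∑ᶠ x ∈ T, g x = ∑ k : ZMod n with r k ∈ T, g (r k) := by
  have hT_image : T = r '' {k | r k ∈ T} := by
    ext x
    constructor
    · intro hx
      obtain ⟨k, rfl⟩ := hT hx
      exact ⟨k, hx, rfl⟩
    · rintro ⟨k, hk, rfl⟩
      exact hk
  rw [hT_image, finsum_mem_image fun _ _ _ _ hkl => r.inj hkl, ← finsum_mem_coe_finset,
    coe_filter]
  simp

theorem stmt14_general (n : ℕ) [NeZero n]
    (T : Set (DihedralGroup n)) (hB : InBooleanAlgebra n T) :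
    ∀ h : ℕ, 1 ≤ h → h ≤ (n - 1) / 2 →
      (∃ z : ℤ, chiSum n h T = (z : ℝ)) ∧
      (∃ z : ℤ, chiSum2 n h T = (z : ℝ)) ∧
      (∃ z : ℤ, 2 * chiSum2 n h T = (z : ℝ) ^ 2) := by
  intro h _ _
  classical
  obtain ⟨hT, hatoms⟩ := hB
  have hζ := exp_two_pi_mul_I_mul_div_pow n h
  obtain ⟨z, hz⟩ := Subring.mem_bot.1 <| sum_pow_val_mem_bot_of_gcd_invariant hζ
    (S := {k | r k ∈ T}) (by simpa using hatoms)
  have hχ : chiSum n h T = 2 * z := by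
    rw [chiSum, finsum_mem_eq_sum_filter_r hT]
    simp_rw [chi_r_eq_two_mul_re, ← mul_sum, ← Complex.re_sum, ← hz, Complex.intCast_re]
  have hχ2 : chiSum2 n h T = 2 * z ^ 2 := by
    rw [chiSum2, finsum_mem_eq_sum_filter_r hT]
    simp_rw [finsum_mem_eq_sum_filter_r hT, r_mul_r, chi_r_eq_two_mul_re, pow_val_add hζ,
      ← mul_sum, ← Complex.re_sum, ← sum_mul_sum, ← hz]
    norm_cast
    ring
  exact ⟨⟨2 * z, by push_cast; exact hχ⟩, ⟨2 * z ^ 2, by push_cast; exact hχ2⟩,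
    ⟨2 * z, by rw [hχ2]; push_cast; ring⟩⟩

/-- Corollary 3.7. If `T ⊆ ⟨a⟩` is a union of atoms of `B(⟨a⟩)`, then for
every `1 ≤ h ≤ ⌊(n−1)/2⌋`, `χ_h(T)` and `χ_h(T²)` are integers and `2χ_h(T²)` is the
square of an integer. -/
theorem stmt14 (n : ℕ) (hn : 3 ≤ n) [NeZero n]
    (T : Set (DihedralGroup n)) (hB : InBooleanAlgebra n T) :
    ∀ h : ℕ, 1 ≤ h → h ≤ (n - 1) / 2 →
      (∃ z : ℤ, chiSum n h T = (z : ℝ)) ∧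
      (∃ z : ℤ, chiSum2 n h T = (z : ℝ)) ∧
      (∃ z : ℤ, 2 * chiSum2 n h T = (z : ℝ) ^ 2) :=
  stmt14_general n T hB
end

section
/- Let k ≥ 1, let n = 3k, and let D_{3k} = ⟨a,b | a^{3k} = b^2 = 1, bab = a^{-1}⟩. Let S = S₁ ∪ S₂ where S₁ = [a] = {a^l : gcd(l,3k) = 1} and S₂ = {b, ba^k}. Then the Cayley graph X(D_{3k},S) is connected and integral, while bS₂ = {1, a^k} is not a union of atoms of B(⟨a⟩). -/
open DihedralGroup Polynomial

/-!
The adjacency matrix of `X(D_n, S)` is `∑ s ∈ S, ρ s`, where `ρ s` is the matrix of right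
translation by `s`. The rotation part `A₁ = ∑ ρ (a^l)` over `gcd(l, n) = 1` is a class sum, hence
commutes with the reflection part `A₂ = ρ b + ρ (b a^k)`, so every eigenvalue of `A₁ + A₂` is an
eigenvalue of `A₁` plus one of `A₂`. As `A₁` is a polynomial in `ρ a`, its eigenvalues are the
Ramanujan sums `∑_{gcd(l, n) = 1} ω^l` at `n`-th roots of unity `ω`, which are integers by Möbius
inversion. With `T = ρ (a^k)` we have `T³ = 1` and `A₂² = 2 + T + T²`, so
`(A₂² - 1)(A₂² - 4) = (T³ - 1)(T + 2) = 0` and the eigenvalues of `A₂` lie in `{±1, ±2}`.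
-/

open Finset
open scoped Pointwise

namespace Module.End

variable {K V : Type*} [Field K] [IsAlgClosed K] [AddCommGroup V] [Module K V]
  [FiniteDimensional K V]

theorem spectrum_add_subset_of_commute {f g : End K V} (hfg : Commute f g) :
    spectrum K (f + g) ⊆ spectrum K f + spectrum K g := by
  intro μ hμ
  rw [← hasEigenvalue_iff_mem_spectrum] at hμ
  let E := eigenspace (f + g) μ
  have hE : Set.MapsTo f E E :=
    mapsTo_genEigenspace_of_comm ((Commute.refl f).add_left hfg.symm) μ 1
  have : Nontrivial E := Submodule.nontrivial_iff_ne_bot.mpr hμ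
  obtain ⟨α, hα⟩ := exists_eigenvalue (f.restrict hE)
  obtain ⟨⟨w, hwE⟩, hw⟩ := hα.exists_hasEigenvector
  have hfw : f w = α • w := congrArg Subtype.val (mem_eigenspace_iff.mp hw.1)
  have hgw : g w = (μ - α) • w := by
    rw [sub_smul, ← hfw, ← mem_eigenspace_iff.mp hwE, LinearMap.add_apply, add_sub_cancel_left]
  have hw0 : w ≠ 0 := fun h => hw.2 (Subtype.ext h)
  refine ⟨α, ?_, μ - α, ?_, add_sub_cancel α μ⟩ <;> rw [← hasEigenvalue_iff_mem_spectrum]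
  · exact hasEigenvalue_of_hasEigenvector ⟨mem_eigenspace_iff.mpr hfw, hw0⟩
  · exact hasEigenvalue_of_hasEigenvector ⟨mem_eigenspace_iff.mpr hgw, hw0⟩

end Module.End

theorem Matrix.spectrum_add_subset_of_commute {K n : Type*} [Field K] [IsAlgClosed K]
    [Fintype n] [DecidableEq n] {A B : Matrix n n K} (hAB : Commute A B) :
    spectrum K (A + B) ⊆ spectrum K A + spectrum K B := by
  have := Module.End.spectrum_add_subset_of_commute (hAB.map Matrix.toLinAlgEquiv')
  rwa [← map_add, AlgEquiv.spectrum_eq, AlgEquiv.spectrum_eq, AlgEquiv.spectrum_eq] at this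

theorem Polynomial.eval_eq_zero_of_mem_spectrum {K A : Type*} [Field K] [Ring A] [Algebra K A]
    [Nontrivial A] {a : A} {p : K[X]} (hp : aeval a p = 0) {μ : K} (hμ : μ ∈ spectrum K a) :
    p.eval μ = 0 := by
  simpa [hp, spectrum.zero_eq] using spectrum.subset_polynomial_aeval a p ⟨μ, hμ, rfl⟩

section RamanujanSum

open ArithmeticFunction
open scoped ArithmeticFunction.Moebius

variable {R : Type*} [CommRing R]

theorem ArithmeticFunction.sum_divisors_moebius (m : ℕ) :
    ∑ d ∈ m.divisors, (μ d : ℤ) = if m = 1 then 1 else 0 := by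
  simpa only [coe_mul_zeta_apply, one_apply] using congrArg (· m) moebius_mul_coe_zeta

theorem ite_coprime_eq_sum_moebius {n : ℕ} (hn : n ≠ 0) (m : ℕ) :
    (if m.Coprime n then 1 else 0 : R) = ∑ d ∈ n.divisors with d ∣ m, (μ d : R) := by
  have hdiv : {d ∈ n.divisors | d ∣ m} = (m.gcd n).divisors := by
    rw [← Nat.divisors_filter_dvd_of_dvd hn (m.gcd_dvd_right n)]
    refine filter_congr fun d hd => ?_
    rw [Nat.dvd_gcd_iff, and_iff_left (Nat.dvd_of_mem_divisors hd)]
  rw [hdiv, ← Int.cast_sum, sum_divisors_moebius]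
  split_ifs <;> simp_all [Nat.Coprime]

theorem sum_filter_dvd_range {M : Type*} [AddCommMonoid M] (f : ℕ → M) {d n : ℕ}
    (hd : d ∣ n) (hd0 : 0 < d) :
    ∑ m ∈ range n with d ∣ m, f m = ∑ j ∈ range (n / d), f (d * j) := by
  refine sum_nbij' (· / d) (d * ·) ?_ ?_ ?_ ?_ ?_
  · simp only [mem_filter, mem_range]
    exact fun m hm => Nat.div_lt_div_of_lt_of_dvd hd hm.1
  · simp only [mem_filter, mem_range]
    exact fun j hj => ⟨(Nat.lt_div_iff_mul_lt' hd j).mp hj, dvd_mul_right d j⟩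
  · exact fun m hm => Nat.mul_div_cancel' (mem_filter.mp hm).2
  · exact fun j _ => Nat.mul_div_cancel_left j hd0
  · exact fun m hm => by rw [Nat.mul_div_cancel' (mem_filter.mp hm).2]

variable [IsDomain R]

-- `x ∈ (⊥ : Subring R)` says that `x` is the image of an integer (`Subring.mem_bot`).
theorem geom_sum_mem_bot_of_pow_eq_one_s15 {z : R} {M : ℕ} (hz : z ^ M = 1) :
    ∑ j ∈ range M, z ^ j ∈ (⊥ : Subring R) := by
  by_cases h1 : z = 1
  · simp [h1]
  · have : (∑ j ∈ range M, z ^ j) * (z - 1) = 0 := by rw [geom_sum_mul, hz, sub_self]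
    rw [(mul_eq_zero.mp this).resolve_right (sub_ne_zero.mpr h1)]
    exact zero_mem _

theorem sum_coprime_pow_mem_bot {ω : R} {n : ℕ} (hω : ω ^ n = 1) :
    ∑ m ∈ range n with m.Coprime n, ω ^ m ∈ (⊥ : Subring R) := by
  rcases eq_or_ne n 0 with rfl | hn
  · simp
  have hmoebius : ∑ m ∈ range n with m.Coprime n, ω ^ m
      = ∑ d ∈ n.divisors, (μ d : R) * ∑ j ∈ range (n / d), (ω ^ d) ^ j := by
    calc ∑ m ∈ range n with m.Coprime n, ω ^ m
        = ∑ m ∈ range n, ∑ d ∈ n.divisors, if d ∣ m then (μ d : R) * ω ^ m else 0 := by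
          simp_rw [← sum_filter, ← sum_mul, ← ite_coprime_eq_sum_moebius hn, ite_mul, one_mul,
            zero_mul, sum_ite, sum_const_zero, add_zero]
      _ = ∑ d ∈ n.divisors, (μ d : R) * ∑ m ∈ range n with d ∣ m, ω ^ m := by
          rw [sum_comm]
          simp_rw [← sum_filter, mul_sum]
      _ = _ := by
          refine sum_congr rfl fun d hd => ?_
          rw [sum_filter_dvd_range _ (Nat.dvd_of_mem_divisors hd) (Nat.pos_of_mem_divisors hd)]
          simp_rw [pow_mul]
  rw [hmoebius]
  refine sum_mem fun d hd => mul_mem (intCast_mem _ _) (geom_sum_mem_bot_of_pow_eq_one_s15 ?_)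
  rw [← pow_mul, Nat.mul_div_cancel' (Nat.dvd_of_mem_divisors hd), hω]

end RamanujanSum

section CayleyGraph

variable {G : Type*} [Group G] {S : Set G}

theorem cayleyGraph_adj_iff (hS : ∀ s ∈ S, s⁻¹ ∈ S) (h1 : 1 ∉ S) {x y : G} :
    (cayleyGraph S).Adj x y ↔ x⁻¹ * y ∈ S := by
  refine ⟨fun ⟨_, h⟩ => h.elim id fun h => ?_, fun h => ⟨?_, Or.inl h⟩⟩
  · simpa using hS _ h
  · rintro rfl
    exact h1 (by simpa using h)

theorem cayleyGraph_adj_mul_left (g : G) {x y : G} :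
    (cayleyGraph S).Adj (g * x) (g * y) ↔ (cayleyGraph S).Adj x y := by
  simp [cayleyGraph, mul_assoc]

theorem cayleyGraph_reachable_mul_left (g : G) {x y : G} (h : (cayleyGraph S).Reachable x y) :
    (cayleyGraph S).Reachable (g * x) (g * y) :=
  h.map ⟨(g * ·), (cayleyGraph_adj_mul_left g).mpr⟩

theorem cayleyGraph_connected_of_closure_eq_top (hS : Subgroup.closure S = ⊤) :
    (cayleyGraph S).Connected := by
  have hreach : ∀ x, (cayleyGraph S).Reachable 1 x := by
    intro x
    induction (hS ▸ Subgroup.mem_top x : x ∈ Subgroup.closure S) using Subgroup.closure_induction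
      with
    | mem s hs =>
      by_cases h1 : s = 1
      · rw [h1]
      · exact SimpleGraph.Adj.reachable ⟨Ne.symm h1, Or.inl (by simpa using hs)⟩
    | one => rfl
    | mul x y _ _ hx hy => exact hx.trans (by simpa using cayleyGraph_reachable_mul_left x hy)
    | inv x _ hx => simpa using (cayleyGraph_reachable_mul_left x⁻¹ hx).symm
  exact (SimpleGraph.connected_iff _).mpr ⟨fun x y => (hreach x).symm.trans (hreach y), ⟨1⟩⟩

end CayleyGraph

section RightRegular

variable (R G : Type*) [Semiring R] [Group G] [Fintype G] [DecidableEq G]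

def rightRegularMatrix : G →* Matrix G G R where
  toFun g := Matrix.of fun x y => if x * g = y then 1 else 0
  map_one' := by ext x y; simp [Matrix.one_apply]
  map_mul' g h := by
    ext x z
    simp only [Matrix.mul_apply, Matrix.of_apply, ite_mul, one_mul, zero_mul, sum_ite_eq,
      mem_univ, if_true, mul_assoc]

variable {R G}

theorem rightRegularMatrix_apply (g x y : G) :
    rightRegularMatrix R G g x y = if x * g = y then 1 else 0 := rfl

theorem commute_sum_rightRegularMatrix {S : Finset G} (hS : ∀ g, ∀ s ∈ S, g * s * g⁻¹ ∈ S)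
    (g : G) : Commute (∑ s ∈ S, rightRegularMatrix R G s) (rightRegularMatrix R G g) := by
  rw [Commute, SemiconjBy, sum_mul, mul_sum]
  simp_rw [← map_mul]
  exact sum_nbij' (g⁻¹ * · * g) (g * · * g⁻¹) (fun s hs => by simpa using hS g⁻¹ s hs)
    (fun s hs => hS g s hs) (fun s _ => by group) (fun s _ => by group) (fun s _ => by group)

theorem adjMat_cayleyGraph {S : Finset G} (hS : ∀ s ∈ S, s⁻¹ ∈ S) (h1 : 1 ∉ S) :
    adjMat (cayleyGraph (S : Set G)) = ∑ s ∈ S, rightRegularMatrix ℂ G s := by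
  ext x y
  have hS' : ∀ s ∈ (S : Set G), s⁻¹ ∈ (S : Set G) := hS
  simp only [adjMat, Matrix.of_apply, Matrix.sum_apply, rightRegularMatrix_apply,
    cayleyGraph_adj_iff hS' h1, ← eq_inv_mul_iff_mul_eq, sum_ite_eq', mem_coe]

end RightRegular

section CoprimeResidues

variable (n : ℕ) [NeZero n]

def coprimeResidues : Finset (ZMod n) := {l | l.val.Coprime n}

variable {n}

theorem mem_coprimeResidues_iff_isUnit {l : ZMod n} : l ∈ coprimeResidues n ↔ IsUnit l := by
  simp only [coprimeResidues, mem_filter, mem_univ, true_and]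
  rw [← ZMod.isUnit_iff_coprime, ZMod.natCast_zmod_val]

theorem sum_coprimeResidues_pow_mem_bot {R : Type*} [CommRing R] [IsDomain R] {ω : R}
    (hω : ω ^ n = 1) : ∑ l ∈ coprimeResidues n, ω ^ l.val ∈ (⊥ : Subring R) := by
  have hval : ∑ l ∈ coprimeResidues n, ω ^ l.val = ∑ m ∈ range n with m.Coprime n, ω ^ m := by
    refine sum_nbij ZMod.val (fun l hl => ?_) (fun a _ b _ h => ZMod.val_injective n h)
      (fun m hm => ⟨m, ?_, ?_⟩) (fun _ _ => rfl)
    · simpa [coprimeResidues] using ⟨ZMod.val_lt l, (mem_filter.mp hl).2⟩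
    · obtain ⟨hmn, hcop⟩ := mem_filter.mp hm
      simpa [coprimeResidues, ZMod.val_natCast_of_lt (mem_range.mp hmn)] using hcop
    · exact ZMod.val_natCast_of_lt (mem_range.mp (mem_filter.mp hm).1)
  rw [hval]
  exact sum_coprime_pow_mem_bot hω

end CoprimeResidues

namespace DihedralGroup

variable {n : ℕ} [NeZero n]

local notation "ρ" => rightRegularMatrix ℂ (DihedralGroup n)

variable (n) in
def coprimeRotations : Finset (DihedralGroup n) :=
  (coprimeResidues n).image r

theorem r_mem_coprimeRotations {l : ZMod n} : r l ∈ coprimeRotations n ↔ IsUnit l := by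
  simp [coprimeRotations, mem_coprimeResidues_iff_isUnit]

theorem sr_notMem_coprimeRotations (j : ZMod n) : sr j ∉ coprimeRotations n := by
  simp [coprimeRotations]

theorem conj_mem_coprimeRotations (g : DihedralGroup n) {s : DihedralGroup n}
    (hs : s ∈ coprimeRotations n) : g * s * g⁻¹ ∈ coprimeRotations n := by
  obtain ⟨l, hl, rfl⟩ := mem_image.mp hs
  cases g <;> simpa [r_mem_coprimeRotations, mem_coprimeResidues_iff_isUnit] using hl

theorem sum_coprimeRotations_eq_aeval :
    ∑ s ∈ coprimeRotations n, ρ s =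
      aeval (ρ (r 1)) (∑ l ∈ coprimeResidues n, (X : ℂ[X]) ^ l.val) := by
  rw [coprimeRotations, sum_image fun _ _ _ _ h => r.inj h, map_sum]
  refine sum_congr rfl fun l _ => ?_
  rw [map_pow, aeval_X, ← map_pow, r_one_pow, ZMod.natCast_zmod_val]

theorem spectrum_sum_coprimeRotations_subset :
    spectrum ℂ (∑ s ∈ coprimeRotations n, ρ s) ⊆ (⊥ : Subring ℂ) := by
  rw [sum_coprimeRotations_eq_aeval, spectrum.map_polynomial_aeval_of_nonempty _ _
    (spectrum.nonempty_of_isAlgClosed_of_finiteDimensional ℂ _)]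
  rintro _ ⟨ω, hω, rfl⟩
  have hωn : ω ^ n = 1 := by
    simpa [← map_pow, r_one_pow_n, spectrum.one_eq] using spectrum.pow_mem_pow _ n hω
  simpa [eval_finsetSum] using sum_coprimeResidues_pow_mem_bot hωn

theorem sq_rightRegularMatrix_sr_zero_add_sr {j : ZMod n} (hj : 3 * j = 0) :
    (ρ (sr 0) + ρ (sr j)) ^ 2 = 2 + ρ (r j) + ρ (r j) ^ 2 := by
  have hneg : -j = j + j := by linear_combination (-1 : ZMod n) * hj
  calc (ρ (sr 0) + ρ (sr j)) ^ 2
      = ρ (sr 0 * sr 0) + ρ (sr 0 * sr j) + ρ (sr j * sr 0) + ρ (sr j * sr j) := by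
        simp only [map_mul]
        noncomm_ring
    _ = 2 + ρ (r j) + ρ (r j) ^ 2 := by
        simp only [sr_mul_sr, sub_self, sub_zero, zero_sub, hneg, r_zero, map_one]
        rw [sq, ← map_mul, r_mul_r, ← one_add_one_eq_two]
        abel

theorem spectrum_rightRegularMatrix_sr_zero_add_sr_subset {j : ZMod n} (hj : 3 * j = 0) :
    spectrum ℂ (ρ (sr 0) + ρ (sr j)) ⊆ (⊥ : Subring ℂ) := by
  set A := ρ (sr 0) + ρ (sr j)
  have hT : ρ (r j) ^ 3 = 1 := by
    rw [← map_pow, r_pow, mul_comm, Nat.cast_ofNat, hj, r_zero, map_one]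
  have hA : aeval A ((X ^ 2 - 1) * (X ^ 2 - 4) : ℂ[X]) = 0 :=
    calc _ = (A ^ 2 - 1) * (A ^ 2 - 4) := by
          simp only [map_mul, map_sub, map_pow, aeval_X, map_one, map_ofNat]
      _ = (ρ (r j) ^ 3 - 1) * (ρ (r j) + 2) := by
          rw [sq_rightRegularMatrix_sr_zero_add_sr hj, ← one_add_one_eq_two,
            show (4 : Matrix (DihedralGroup n) (DihedralGroup n) ℂ) = 1 + 1 + 1 + 1 by norm_num]
          noncomm_ring
      _ = 0 := by rw [hT, sub_self, zero_mul]
  intro μ hμ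
  have hroot := eval_eq_zero_of_mem_spectrum hA hμ
  simp only [eval_mul, eval_sub, eval_pow, eval_X, eval_one, eval_ofNat] at hroot
  have hfactors : (μ - 1) * (μ + 1) * (μ - 2) * (μ + 2) = 0 := by linear_combination hroot
  simp only [mul_eq_zero, sub_eq_zero, add_eq_zero_iff_eq_neg] at hfactors
  rcases hfactors with ((rfl | rfl) | rfl) | rfl
  exacts [⟨1, by simp⟩, ⟨-1, by simp⟩, ⟨2, by simp⟩, ⟨-2, by simp⟩]

theorem closure_eq_top_of_r_one_mem_of_sr_zero_mem {S : Set (DihedralGroup n)} (hr : r 1 ∈ S)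
    (hsr : sr 0 ∈ S) : Subgroup.closure S = ⊤ := by
  have hr' : ∀ i, r i ∈ Subgroup.closure S := fun i => by
    simpa [r_one_pow] using Subgroup.pow_mem _ (Subgroup.subset_closure hr) i.val
  refine eq_top_iff.mpr fun x _ => ?_
  cases x with
  | r i => exact hr' i
  | sr i => simpa using Subgroup.mul_mem _ (Subgroup.subset_closure hsr) (hr' i)

theorem connected_cayleyGraph_coprimeRotations_union (j : ZMod n) :
    (cayleyGraph (↑(coprimeRotations n ∪ {sr 0, sr j}) : Set (DihedralGroup n))).Connected :=
  cayleyGraph_connected_of_closure_eq_top <| closure_eq_top_of_r_one_mem_of_sr_zero_mem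
    (by simp [r_mem_coprimeRotations]) (by simp)

theorem adjMat_cayleyGraph_coprimeRotations_union {j : ZMod n} (hj : j ≠ 0) :
    adjMat (cayleyGraph (↑(coprimeRotations n ∪ {sr 0, sr j}) : Set (DihedralGroup n))) =
      ∑ s ∈ coprimeRotations n, ρ s + (ρ (sr 0) + ρ (sr j)) := by
  have : Nontrivial (ZMod n) := ⟨⟨j, 0, hj⟩⟩
  rw [adjMat_cayleyGraph, sum_union, sum_pair]
  · simpa using hj.symm
  · simp only [disjoint_left, mem_insert, mem_singleton]
    rintro _ hs (rfl | rfl) <;> exact sr_notMem_coprimeRotations _ hs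
  · rintro (_ | _) hs <;> simpa [r_mem_coprimeRotations] using hs
  · rw [one_def, mem_union, r_mem_coprimeRotations]
    simp [-r_zero]

theorem isIntegralGraph_cayleyGraph_coprimeRotations_union {j : ZMod n} (hj0 : j ≠ 0)
    (hj : 3 * j = 0) :
    IsIntegralGraph
      (cayleyGraph (↑(coprimeRotations n ∪ {sr 0, sr j}) : Set (DihedralGroup n))) := by
  intro μ hμ
  rw [adjMat_cayleyGraph_coprimeRotations_union hj0] at hμ
  have hcomm : Commute (∑ s ∈ coprimeRotations n, ρ s) (ρ (sr 0) + ρ (sr j)) :=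
    (commute_sum_rightRegularMatrix (fun g _ => conj_mem_coprimeRotations g) _).add_right
      (commute_sum_rightRegularMatrix (fun g _ => conj_mem_coprimeRotations g) _)
  obtain ⟨α, hα, β, hβ, rfl⟩ := Matrix.spectrum_add_subset_of_commute hcomm hμ
  exact Subring.mem_bot.mp (add_mem (spectrum_sum_coprimeRotations_subset hα)
    (spectrum_rightRegularMatrix_sr_zero_add_sr_subset hj hβ)) |>.imp fun _ => Eq.symm

theorem not_inBooleanAlgebra_r_zero_r (k : ℕ) [NeZero (3 * k)] :
    ¬ InBooleanAlgebra (3 * k) {r 0, r (k : ZMod (3 * k))} := by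
  rintro ⟨-, hatom⟩
  have hk := NeZero.pos (3 * k)
  have hval : ∀ m < 3 * k, ((m : ℕ) : ZMod (3 * k)).val = m := fun m => ZMod.val_natCast_of_lt
  -- `a^k` and `a^{2k}` lie in the same atom, but only `a^k` lies in the set.
  have hgcd : Nat.gcd ((k : ℕ) : ZMod (3 * k)).val (3 * k)
      = Nat.gcd ((2 * k : ℕ) : ZMod (3 * k)).val (3 * k) := by
    rw [hval k (by omega), hval (2 * k) (by omega), Nat.gcd_mul_right 2 k 3,
      Nat.gcd_eq_left (dvd_mul_left k 3)]
    norm_num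
  have h2k := (hatom _ _ hgcd).mp (Or.inr rfl)
  simp only [Set.mem_insert_iff, Set.mem_singleton_iff, r.injEq] at h2k
  rcases h2k with h | h
  · have := congrArg ZMod.val h
    rw [hval (2 * k) (by omega), ZMod.val_zero] at this
    omega
  · have := congrArg ZMod.val h
    rw [hval (2 * k) (by omega), hval k (by omega)] at this
    omega

end DihedralGroup

theorem stmt15_general (k : ℕ) [NeZero (3 * k)]
    (S₁ S₂ S : Set (DihedralGroup (3 * k)))
    (hS₁ : S₁ = {x | ∃ l : ZMod (3 * k), x = DihedralGroup.r l ∧ Nat.gcd l.val (3 * k) = 1})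
    (hS₂ : S₂ = {DihedralGroup.sr 0, DihedralGroup.sr (k : ZMod (3 * k))})
    (hS : S = S₁ ∪ S₂) :
    (cayleyGraph S).Connected ∧ IsIntegralGraph (cayleyGraph S) ∧
      ¬ InBooleanAlgebra (3 * k)
        {DihedralGroup.r 0, DihedralGroup.r (k : ZMod (3 * k))} := by
  have hS' : S = ↑(coprimeRotations (3 * k) ∪ {sr 0, sr (k : ZMod (3 * k))}) := by
    ext x
    rcases x with l | l <;> simp [hS, hS₁, hS₂, coprimeRotations, coprimeResidues, Nat.Coprime]
  have hk0 : (k : ZMod (3 * k)) ≠ 0 := by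
    rw [Ne, ZMod.natCast_eq_zero_iff]
    have := NeZero.pos (3 * k)
    exact fun h => absurd (Nat.le_of_dvd (by omega) h) (by omega)
  have hk3 : 3 * (k : ZMod (3 * k)) = 0 := by exact_mod_cast ZMod.natCast_self (3 * k)
  subst hS'
  exact ⟨connected_cayleyGraph_coprimeRotations_union _,
    isIntegralGraph_cayleyGraph_coprimeRotations_union hk0 hk3, not_inBooleanAlgebra_r_zero_r k⟩

/-- Example 3.8. In `D_{3k}` with `S₁ = [a] = {a^l : gcd(l,3k) = 1}` and
`S₂ = {b, ba^k}`, the Cayley graph `X(D_{3k}, S₁ ∪ S₂)` is connected and integral, yet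
`bS₂ = {1, a^k}` is not a union of atoms of `B(⟨a⟩)`. -/
theorem stmt15 (k : ℕ) (hk : 1 ≤ k) [NeZero (3 * k)]
    (S₁ S₂ S : Set (DihedralGroup (3 * k)))
    (hS₁ : S₁ = {x | ∃ l : ZMod (3 * k), x = DihedralGroup.r l ∧ Nat.gcd l.val (3 * k) = 1})
    (hS₂ : S₂ = {DihedralGroup.sr 0, DihedralGroup.sr (k : ZMod (3 * k))})
    (hS : S = S₁ ∪ S₂) :
    (cayleyGraph S).Connected ∧ IsIntegralGraph (cayleyGraph S) ∧
      ¬ InBooleanAlgebra (3 * k)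
        {DihedralGroup.r 0, DihedralGroup.r (k : ZMod (3 * k))} :=
  stmt15_general k S₁ S₂ S hS₁ hS₂ hS
end

section
/- Let D_7 = ⟨a,b | a^7 = b^2 = 1, bab = a^{-1}⟩ be the dihedral group of order 14 and let S = {ba, ba², ba⁴}. Then the Cayley graph X(D_7,S) is connected but not integral, even though the multiset S² = 3*{1} ∪ [a] (each nonidentity power of a appearing once) has multiplicity function constant on each atom of ⟨a⟩. -/
open DihedralGroup Polynomial

/-!
The residues `{1, 2, 4}` are the nonzero squares mod 7 and form a perfect difference set: every
nonzero residue is a difference of two of them in exactly one way, which is the multiplicity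
statement about `S²`. Connectivity holds because `ba · ba² = a`, so `S` generates `D_7`.
For a character `ψ` of `ZMod n` and `D ⊆ ZMod n`, put `η = ∑_{d ∈ D} ψ d`; if `μ² = η · η̄`, then
`a^k ↦ μ ψ(k)`, `ba^k ↦ η ψ(-k)` is an eigenvector of `X(D_n, bD)` with eigenvalue `μ`.
For `D = {1, 2, 4}` the Gauss period `η = (-1 + √-7)/2` has `η · η̄ = 2`, so `√2` is an eigenvalue.
-/

open SimpleGraph Finset
open scoped Matrix

section Cayley

variable {G : Type*} [Group G]

lemma cayleyGraph_eq_mulCayley (S : Set G) : cayleyGraph S = mulCayley S := by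
  ext x y
  rw [cayleyGraph, fromRel_adj, mulCayley_adj]

namespace SimpleGraph

lemma mulCayley_reachable_mul_left {S : Set G} {x y : G} (h : (mulCayley S).Reachable x y)
    (a : G) : (mulCayley S).Reachable (a * x) (a * y) :=
  h.map { toFun := (a * ·), map_rel' := mulCayley_adj_mul_iff_right.mpr }

theorem mulCayley_connected_of_closure_eq_top {S : Set G} (hS : Subgroup.closure S = ⊤) :
    (mulCayley S).Connected := by
  have hreach : ∀ g, (mulCayley S).Reachable 1 g := by
    intro g
    have hg : g ∈ Subgroup.closure S := hS ▸ Subgroup.mem_top g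
    induction hg using Subgroup.closure_induction with
    | mem s hs =>
      by_cases h1 : (1 : G) = s
      · exact h1 ▸ Reachable.refl _
      · exact Adj.reachable ((mulCayley_adj' S 1 s).2 ⟨h1, s, hs, Or.inl (one_mul s)⟩)
    | one => rfl
    | mul a b _ _ ha hb => exact ha.trans (by simpa using mulCayley_reachable_mul_left hb a)
    | inv a _ ha => simpa using (mulCayley_reachable_mul_left ha a⁻¹).symm
  exact (connected_iff _).2 ⟨fun x y => (hreach x).symm.trans (hreach y), ⟨1⟩⟩

lemma mulCayley_adj_iff_of_inv_mem {S : Set G} (hinv : ∀ s ∈ S, s⁻¹ ∈ S) (h1 : (1 : G) ∉ S)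
    (x y : G) : (mulCayley S).Adj x y ↔ x⁻¹ * y ∈ S := by
  rw [mulCayley_adj]
  constructor
  · rintro ⟨-, h | h⟩
    · exact h
    · simpa using hinv _ h
  · intro h
    exact ⟨fun hxy => h1 (by simpa [hxy] using h), Or.inl h⟩

end SimpleGraph

lemma adjMat_mulCayley_mulVec [Fintype G] {S : Finset G} (hinv : ∀ s ∈ S, s⁻¹ ∈ S)
    (h1 : (1 : G) ∉ S) (f : G → ℂ) (x : G) :
    (adjMat (mulCayley (S : Set G)) *ᵥ f) x = ∑ s ∈ S, f (x * s) := by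
  classical
  simp only [Matrix.mulVec, dotProduct, adjMat, Matrix.of_apply, ite_mul, one_mul, zero_mul,
    mulCayley_adj_iff_of_inv_mem (S := (S : Set G)) hinv h1, Finset.mem_coe]
  rw [← Equiv.sum_comp (Equiv.mulLeft x)]
  simp [Finset.sum_ite_mem]

end Cayley

lemma Matrix.mem_spectrum_of_mulVec_eq_smul {ι K : Type*} [Fintype ι] [DecidableEq ι] [Field K]
    {A : Matrix ι ι K} {v : ι → K} {μ : K} (hv : v ≠ 0) (h : A *ᵥ v = μ • v) :
    μ ∈ spectrum K A := by
  rw [← Matrix.spectrum_toLin']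
  refine Module.End.HasEigenvalue.mem_spectrum (Module.End.hasEigenvalue_of_hasEigenvector ⟨?_, hv⟩)
  rwa [Module.End.mem_eigenspace_iff, Matrix.toLin'_apply]

lemma not_isIntegralGraph_of_irrational_mem_spectrum {V : Type*} [Fintype V] [DecidableEq V]
    {Γ : SimpleGraph V} {μ : ℝ} (hμ : Irrational μ) (h : (μ : ℂ) ∈ spectrum ℂ (adjMat Γ)) :
    ¬ IsIntegralGraph Γ := fun hΓ =>
  let ⟨z, hz⟩ := hΓ _ h
  hμ.ne_int z (by exact_mod_cast hz)

namespace DihedralGroup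

variable {n : ℕ}

lemma closure_eq_top_of_sr_mem {S : Set (DihedralGroup n)} {i : ZMod n} (h₀ : sr i ∈ S)
    (h₁ : sr (i + 1) ∈ S) : Subgroup.closure S = ⊤ := by
  rw [eq_top_iff]
  rintro g -
  have hr : r 1 ∈ Subgroup.closure S := by
    simpa [sr_mul_sr] using
      mul_mem (Subgroup.subset_closure h₀) (Subgroup.subset_closure h₁)
  have hrk : ∀ k, r k ∈ Subgroup.closure S := fun k => by
    simpa [r_one_zpow, ZMod.intCast_zmod_cast] using zpow_mem hr (k.cast : ℤ)
  rcases g with k | k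
  · exact hrk k
  · simpa [sr_mul_r] using mul_mem (Subgroup.subset_closure h₀) (hrk (k - i))

lemma sqMult_coe_finset (S : Finset (DihedralGroup n)) (x : DihedralGroup n) :
    sqMult (S : Set (DihedralGroup n)) x = #{p ∈ S ×ˢ S | p.1 * p.2 = x} := by
  rw [sqMult, ← Nat.card_eq_finsetCard]
  exact Nat.card_congr (Equiv.subtypeEquivRight fun p => by simp [and_assoc])

def srEigenvector (ψ : AddChar (ZMod n) ℂ) (μ η : ℂ) : DihedralGroup n → ℂ
  | r k => μ * ψ k
  | sr k => η * ψ (-k)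

theorem mem_spectrum_adjMat_mulCayley_image_sr [NeZero n] (ψ : AddChar (ZMod n) ℂ)
    (D : Finset (ZMod n)) {μ : ℂ} (hμ : μ ≠ 0)
    (hμ2 : μ ^ 2 = (∑ d ∈ D, ψ d) * ∑ d ∈ D, ψ (-d)) :
    μ ∈ spectrum ℂ (adjMat (mulCayley (↑(D.image sr) : Set (DihedralGroup n)))) := by
  set η := ∑ d ∈ D, ψ d
  have hinv : ∀ s ∈ D.image sr, s⁻¹ ∈ D.image sr := by simp
  have h1 : (1 : DihedralGroup n) ∉ D.image sr := by simp [← r_zero]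
  refine Matrix.mem_spectrum_of_mulVec_eq_smul (v := srEigenvector ψ μ η) ?_ ?_
  · intro hv
    simpa [srEigenvector, hμ] using congrFun hv (r 0)
  · funext x
    rw [adjMat_mulCayley_mulVec hinv h1, Finset.sum_image (fun _ _ _ _ h => sr.inj h)]
    rcases x with k | k
    · simp only [r_mul_sr, srEigenvector, Pi.smul_apply, smul_eq_mul]
      calc ∑ d ∈ D, η * ψ (-(d - k)) = ψ k * (η * ∑ d ∈ D, ψ (-d)) := by
            rw [Finset.mul_sum, Finset.mul_sum]
            refine Finset.sum_congr rfl fun d _ => ?_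
            rw [neg_sub, sub_eq_add_neg, AddChar.map_add_eq_mul]
            ring
        _ = μ * (μ * ψ k) := by rw [← hμ2]; ring
    · simp only [sr_mul_sr, srEigenvector, Pi.smul_apply, smul_eq_mul, sub_eq_add_neg,
        AddChar.map_add_eq_mul, ← Finset.sum_mul, ← Finset.mul_sum]
      ring

end DihedralGroup

lemma sum_zmodChar_mul_sum_neg_eq_two {ζ : ℂ} (hζ : IsPrimitiveRoot ζ 7) :
    (∑ d ∈ ({1, 2, 4} : Finset (ZMod 7)), AddChar.zmodChar 7 hζ.pow_eq_one d) *
      ∑ d ∈ ({1, 2, 4} : Finset (ZMod 7)), AddChar.zmodChar 7 hζ.pow_eq_one (-d) = 2 := by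
  have hsum : ∑ i ∈ range 7, ζ ^ i = 0 := hζ.geom_sum_eq_zero (by norm_num)
  simp only [Finset.sum_range_succ, range_zero, sum_empty] at hsum
  rw [Finset.sum_insert (by decide), Finset.sum_insert (by decide), Finset.sum_singleton,
    Finset.sum_insert (by decide), Finset.sum_insert (by decide), Finset.sum_singleton]
  simp only [AddChar.zmodChar_apply]
  rw [show (1 : ZMod 7).val = 1 from rfl, show (2 : ZMod 7).val = 2 from rfl,
    show (4 : ZMod 7).val = 4 from rfl, show (-1 : ZMod 7).val = 6 from rfl,
    show (-2 : ZMod 7).val = 5 from rfl, show (-4 : ZMod 7).val = 3 from rfl]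
  linear_combination (ζ ^ 3 + ζ ^ 2 + ζ + 3) * hζ.pow_eq_one + hsum

/-- Example 3.9. In `D_7` with `S = {ba, ba², ba⁴}`, the Cayley graph
`X(D_7,S)` is connected but not integral, even though the multiset `S² = 3*{1} ∪ [a]`
has multiplicity function constant on each atom of `⟨a⟩` (namely multiplicity `3` at `1`
and `1` at each nonidentity power of `a`). -/
theorem stmt16 (S : Set (DihedralGroup 7))
    (hS : S = {DihedralGroup.sr 1, DihedralGroup.sr 2, DihedralGroup.sr 4}) :
    (cayleyGraph S).Connected ∧ ¬ IsIntegralGraph (cayleyGraph S) ∧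
      sqMult S (DihedralGroup.r 0) = 3 ∧
      (∀ k : ZMod 7, k ≠ 0 → sqMult S (DihedralGroup.r k) = 1) := by
  have hS' : S = ↑(({1, 2, 4} : Finset (ZMod 7)).image sr) := by
    rw [hS]
    simp
  have hζ := Complex.isPrimitiveRoot_exp 7 (by norm_num)
  simp only [hS', cayleyGraph_eq_mulCayley, sqMult_coe_finset]
  refine ⟨mulCayley_connected_of_closure_eq_top (closure_eq_top_of_sr_mem (i := 1) ?_ ?_),
    not_isIntegralGraph_of_irrational_mem_spectrum irrational_sqrt_two
      (mem_spectrum_adjMat_mulCayley_image_sr (AddChar.zmodChar 7 hζ.pow_eq_one) _ (by simp) ?_),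
    by decide, by decide⟩
  · simp
  · simp [one_add_one_eq_two]
  · rw [sum_zmodChar_mul_sum_neg_eq_two hζ, ← Complex.ofReal_pow, Real.sq_sqrt zero_le_two]
    norm_num
end
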